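/- Let A and B be finite types and let k ≥ 2 be an integer. Then PPT#_k(A:B) ⊆ PPT_k(A:B). -/

import Mathlib

/-!
For Hermitian `X`, the matrices `|X| - X = 2X⁻` and `|X| + X = 2X⁺` are positive semidefinite,
so `|ω_i^{T_B}| ⪯ ω_{i+1}` gives `-ω_{i+1} ⪯ ω_i^{T_B} ⪯ ω_{i+1}`: the same chain `ω` witnesses
membership in `PPT_k`. The `ω_i` are Hermitian because each `ω_{i+1}` dominates a positive
semidefinite matrix, and partial transposition preserves Hermiticity.
-/

open Matrix
open scoped ComplexOrder

/-- Total positive semidefinite square root: the PSD square root of `M` if `M` is PSD,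
and junk value `0` otherwise. -/
noncomputable def msqrt {n : Type*} [Fintype n] [DecidableEq n]
    (M : Matrix n n ℂ) : Matrix n n ℂ :=
  letI := Classical.dec M.PosSemidef
  if h : M.PosSemidef then
    (h.1.eigenvectorUnitary : Matrix n n ℂ) *
      diagonal ((↑) ∘ (h.1.eigenvalues · |>.sqrt)) *
      (star h.1.eigenvectorUnitary : Matrix n n ℂ) else 0

/-- The trace norm `‖M‖₁ = tr √(Mᴴ M)` of a complex matrix, as a real number. -/
noncomputable def traceNorm {n : Type*} [Fintype n] [DecidableEq n]
    (M : Matrix n n ℂ) : ℝ :=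
  (msqrt (Mᴴ * M)).trace.re

/-- The partial transpose over the second party `B`:
`M^{T_B}((a,b),(a',b')) = M((a,b'),(a',b))`. -/
def ptB {A B : Type*} (M : Matrix (A × B) (A × B) ℂ) : Matrix (A × B) (A × B) ℂ :=
  fun x y => M (x.1, y.2) (y.1, x.2)

/-- The matrix absolute value `|M| = √(Mᴴ M)`. -/
noncomputable def matAbs {n : Type*} [Fintype n] [DecidableEq n]
    (M : Matrix n n ℂ) : Matrix n n ℂ :=
  msqrt (Mᴴ * M)

/-- The set `PPT#_k(A:B)`: positive semidefinite `ω₁` such that there exist `ω₂, …, ω_k` with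
`|ω_i^{T_B}| ⪯ ω_{i+1}` for all `1 ≤ i ≤ k−1` and `‖ω_k^{T_B}‖₁ ≤ 1`. -/
def PPThashSet {A B : Type*} [Fintype A] [Fintype B] [DecidableEq A] [DecidableEq B]
    (k : ℕ) : Set (Matrix (A × B) (A × B) ℂ) :=
  {σ | σ.PosSemidef ∧ ∃ ω : ℕ → Matrix (A × B) (A × B) ℂ, ω 1 = σ ∧
    (∀ i, 1 ≤ i → i ≤ k - 1 → (ω (i + 1) - matAbs (ptB (ω i))).PosSemidef) ∧
    traceNorm (ptB (ω k)) ≤ 1}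

/-- The set `PPT_k(A:B)`: positive semidefinite `ω₁` such that there exist `ω₂, …, ω_k` with
`−ω_{i+1} ⪯ ω_i^{T_B} ⪯ ω_{i+1}` for all `1 ≤ i ≤ k−1` and `‖ω_k^{T_B}‖₁ ≤ 1`. -/
def PPTset {A B : Type*} [Fintype A] [Fintype B] [DecidableEq A] [DecidableEq B]
    (k : ℕ) : Set (Matrix (A × B) (A × B) ℂ) :=
  {σ | σ.PosSemidef ∧ ∃ ω : ℕ → Matrix (A × B) (A × B) ℂ, ω 1 = σ ∧
    (∀ i, 1 ≤ i → i ≤ k - 1 →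
      (ω (i + 1) - ptB (ω i)).PosSemidef ∧ (ω (i + 1) + ptB (ω i)).PosSemidef) ∧
    traceNorm (ptB (ω k)) ≤ 1}

open scoped MatrixOrder

section MatAbs

variable {n : Type*} [Fintype n] [DecidableEq n]

lemma msqrt_eq_cfcSqrt {M : Matrix n n ℂ} (h : M.PosSemidef) : msqrt M = CFC.sqrt M := by
  rw [CFC.sqrt_eq_cfc, cfc_nnreal_eq_real _ M, h.1.cfc_eq, msqrt, dif_pos h]
  simp only [IsHermitian.cfc, Real.coe_sqrt, Real.coe_toNNReal', Unitary.conjStarAlgAut_apply]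
  congr 3
  ext i
  simp [max_eq_left (h.eigenvalues_nonneg i)]

lemma matAbs_eq_cfcAbs (M : Matrix n n ℂ) : matAbs M = CFC.abs M :=
  msqrt_eq_cfcSqrt (posSemidef_conjTranspose_mul_self M)

lemma posSemidef_matAbs (M : Matrix n n ℂ) : (matAbs M).PosSemidef := by
  rw [matAbs_eq_cfcAbs, ← nonneg_iff_posSemidef]
  exact CFC.abs_nonneg M

lemma Matrix.IsHermitian.posSemidef_matAbs_sub_self {M : Matrix n n ℂ} (hM : M.IsHermitian) :
    (matAbs M - M).PosSemidef := by
  rw [matAbs_eq_cfcAbs, CFC.abs_sub_self M hM.isSelfAdjoint, ← nonneg_iff_posSemidef]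
  exact smul_nonneg zero_le_two (CFC.negPart_nonneg M)

lemma Matrix.IsHermitian.posSemidef_matAbs_add_self {M : Matrix n n ℂ} (hM : M.IsHermitian) :
    (matAbs M + M).PosSemidef := by
  rw [matAbs_eq_cfcAbs, CFC.abs_add_self M hM.isSelfAdjoint, ← nonneg_iff_posSemidef]
  exact smul_nonneg zero_le_two (CFC.posPart_nonneg M)

lemma isHermitian_of_posSemidef_sub_matAbs {N M : Matrix n n ℂ}
    (h : (N - matAbs M).PosSemidef) : N.IsHermitian := by
  simpa using h.1.add (posSemidef_matAbs M).1

lemma Matrix.IsHermitian.posSemidef_sub_and_add_of_posSemidef_sub_matAbs {N M : Matrix n n ℂ}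
    (hM : M.IsHermitian) (h : (N - matAbs M).PosSemidef) :
    (N - M).PosSemidef ∧ (N + M).PosSemidef := by
  constructor
  · convert h.add hM.posSemidef_matAbs_sub_self using 1
    abel
  · convert h.add hM.posSemidef_matAbs_add_self using 1
    abel

end MatAbs

lemma isHermitian_ptB {A B : Type*} {M : Matrix (A × B) (A × B) ℂ} (hM : M.IsHermitian) :
    (ptB M).IsHermitian := by
  ext ⟨a, b⟩ ⟨a', b'⟩
  simpa [ptB, conjTranspose_apply] using congrFun (congrFun hM (a, b')) (a', b)

theorem PPThashSet_subset_PPTset_general {A B : Type*}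
    [Fintype A] [Fintype B] [DecidableEq A] [DecidableEq B]
    (k : ℕ) :
    PPThashSet (A := A) (B := B) k ⊆ PPTset (A := A) (B := B) k := by
  rintro σ ⟨hσ, ω, hω1, hstep, htr⟩
  refine ⟨hσ, ω, hω1, fun i hi hik => ?_, htr⟩
  have hωi : (ω i).IsHermitian := by
    obtain rfl | ⟨j, hj, rfl⟩ : i = 1 ∨ ∃ j, 1 ≤ j ∧ i = j + 1 := by
      rcases hi.eq_or_lt with h | h
      · exact .inl h.symm
      · exact .inr ⟨i - 1, by omega, by omega⟩
    · exact hω1 ▸ hσ.1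
    · exact isHermitian_of_posSemidef_sub_matAbs (hstep j hj (by omega))
  exact (isHermitian_ptB hωi).posSemidef_sub_and_add_of_posSemidef_sub_matAbs (hstep i hi hik)

theorem PPThashSet_subset_PPTset {A B : Type*}
    [Fintype A] [Fintype B] [DecidableEq A] [DecidableEq B]
    (k : ℕ) (hk : 2 ≤ k) :
    PPThashSet (A := A) (B := B) k ⊆ PPTset (A := A) (B := B) k :=
  PPThashSet_subset_PPTset_general k
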